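/- Let r : [λ₁, ∞) → ℝ be C² with r(λ) > 0, r'(λ₁) > 0, and suppose r'' > -C r^{-2} (r')² for a constant C > 0 wherever r' > 0. Then r'(λ) > r'(λ₁) e^{-C/r(λ₁)} for all λ ≥ λ₁, and consequently r(λ) → ∞ as λ → ∞. -/

import Mathlib

/-!
Where `r' > 0` the hypothesis reads `(log r')' > C r' / r² = (-C / r)'`, so `log r' - C / r` is
increasing there and `r'(λ) > r'(λ₁) e^{C/r(λ) - C/r(λ₁)} > r'(λ₁) e^{-C/r(λ₁)} =: ε`. At the first
point where `r'` would come down to `ε`, `r'` is still positive on all of `[λ₁, λ]`, so this bound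
applies there and gives a contradiction. Hence `r' > ε` throughout and `r` grows at least linearly.
-/

open Set Filter Real

theorem lt_of_mem_Ici_of_forall_le_on_Icc {f : ℝ → ℝ} {a ε : ℝ} (hf : ContinuousOn f (Ici a))
    (ha : ε < f a) (hstep : ∀ c, a < c → (∀ x ∈ Icc a c, ε ≤ f x) → ε < f c) :
    ∀ x ∈ Ici a, ε < f x := by
  by_contra! ⟨x, hx, hfx⟩
  set S := Icc a x ∩ f ⁻¹' Iic ε
  have hS : IsClosed S :=
    (hf.mono Icc_subset_Ici_self).preimage_isClosed_of_isClosed isClosed_Icc isClosed_Iic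
  have hSbdd : BddBelow S := ⟨a, fun y hy => hy.1.1⟩
  obtain ⟨⟨hac_le, hcx⟩, hfc⟩ : sInf S ∈ S := hS.csInf_mem ⟨x, ⟨hx, le_rfl⟩, hfx⟩ hSbdd
  set c := sInf S
  have hbefore : ∀ y ∈ Ico a c, ε < f y := fun y hy => by
    by_contra! hfy
    exact hy.2.not_ge (csInf_le hSbdd ⟨⟨hy.1, hy.2.le.trans hcx⟩, hfy⟩)
  have hac : a < c := hac_le.lt_of_ne fun h => (h ▸ ha).not_ge hfc
  have hle : closure (Ico a c) ⊆ Icc a c ∩ f ⁻¹' Ici ε :=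
    closure_minimal (fun y hy => ⟨Ico_subset_Icc_self hy, (hbefore y hy).le⟩)
      ((hf.mono Icc_subset_Ici_self).preimage_isClosed_of_isClosed isClosed_Icc isClosed_Ici)
  rw [closure_Ico hac.ne] at hle
  exact (hstep c hac fun y hy => (hle hy).2).not_ge hfc

theorem hasDerivAt_log_deriv_sub_div {r : ℝ → ℝ} {C x : ℝ} (hr : DifferentiableAt ℝ r x)
    (hr' : DifferentiableAt ℝ (deriv r) x) (hx : r x ≠ 0) (hx' : deriv r x ≠ 0) :
    HasDerivAt (fun y => log (deriv r y) - C / r y)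
      (deriv (deriv r) x / deriv r x + C * deriv r x / r x ^ 2) x := by
  refine (hr'.hasDerivAt.log hx' |>.sub ((hasDerivAt_const x C).div hr.hasDerivAt hx)).congr_deriv ?_
  ring

theorem strictMonoOn_log_deriv_sub_div {r : ℝ → ℝ} {C a b : ℝ} (hr : Differentiable ℝ r)
    (hr' : Differentiable ℝ (deriv r)) (hpos : ∀ x ∈ Icc a b, 0 < r x)
    (hd : ∀ x ∈ Icc a b, 0 < deriv r x)
    (hineq : ∀ x ∈ Ioo a b, -C * r x ^ (-(2 : ℝ)) * deriv r x ^ 2 < deriv (deriv r) x) :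
    StrictMonoOn (fun x => log (deriv r x) - C / r x) (Icc a b) := by
  refine strictMonoOn_of_deriv_pos (convex_Icc a b) ?_ fun x hx => ?_
  · exact (hr'.continuous.continuousOn.log fun x hx => (hd x hx).ne').sub
      (continuousOn_const.div hr.continuous.continuousOn fun x hx => (hpos x hx).ne')
  rw [interior_Icc] at hx
  have hrx := hpos x (Ioo_subset_Icc_self hx)
  have hdx := hd x (Ioo_subset_Icc_self hx)
  rw [(hasDerivAt_log_deriv_sub_div (hr x) (hr' x) hrx.ne' hdx.ne').deriv]
  have hg' : deriv (deriv r) x / deriv r x + C * deriv r x / r x ^ 2 =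
      (deriv (deriv r) x - -C * r x ^ (-(2 : ℝ)) * deriv r x ^ 2) / deriv r x := by
    rw [rpow_neg hrx.le, rpow_two]
    field_simp
    ring
  rw [hg']
  exact div_pos (sub_pos.2 (hineq x hx)) hdx

theorem mul_exp_neg_div_lt_deriv {r : ℝ → ℝ} {C a b : ℝ} (hC : 0 ≤ C) (hab : a < b)
    (hr : Differentiable ℝ r) (hr' : Differentiable ℝ (deriv r)) (hpos : ∀ x ∈ Icc a b, 0 < r x)
    (hd : ∀ x ∈ Icc a b, 0 < deriv r x)
    (hineq : ∀ x ∈ Ioo a b, -C * r x ^ (-(2 : ℝ)) * deriv r x ^ 2 < deriv (deriv r) x) :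
    deriv r a * exp (-C / r a) < deriv r b := by
  have ha := left_mem_Icc.2 hab.le
  have hb := right_mem_Icc.2 hab.le
  have hmono := strictMonoOn_log_deriv_sub_div hr hr' hpos hd hineq ha hb hab
  have hCb : 0 ≤ C / r b := div_nonneg hC (hpos b hb).le
  rw [← exp_log (hd b hb), ← exp_log (hd a ha), ← exp_add, exp_lt_exp, neg_div]
  linarith

theorem tendsto_atTop_of_pos_le_deriv {f : ℝ → ℝ} {a ε : ℝ} (hε : 0 < ε)
    (hf : Differentiable ℝ f) (hle : ∀ x ∈ Ici a, ε ≤ deriv f x) : Tendsto f atTop atTop := by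
  have hlin : ∀ x ∈ Ici a, f a + ε * (x - a) ≤ f x := fun x hx => by
    have := (convex_Ici a).mul_sub_le_image_sub_of_le_deriv hf.continuous.continuousOn
      hf.differentiableOn (fun y hy => hle y (interior_subset hy)) a self_mem_Ici x hx hx
    linarith
  refine tendsto_atTop_mono' atTop (eventually_ge_atTop a |>.mono hlin) ?_
  exact tendsto_atTop_add_const_left _ _ <|
    (tendsto_atTop_add_const_right _ (-a) tendsto_id).const_mul_atTop hε

/-- If r is C², positive, with r'(lam₁) > 0, and r'' > -C r^{-2}(r')² wherever r' > 0,
then r' stays above r'(lam₁)e^{-C/r(lam₁)} and r diverges to infinity. -/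
theorem r_diverges (lam₁ C : ℝ) (hC : 0 < C) (r : ℝ → ℝ) (hr : ContDiff ℝ 2 r)
    (hpos : ∀ l ∈ Set.Ici lam₁, 0 < r l)
    (hd1 : 0 < deriv r lam₁)
    (hineq : ∀ l ∈ Set.Ici lam₁, 0 < deriv r l →
      deriv (deriv r) l > -C * (r l) ^ (-(2 : ℝ)) * (deriv r l) ^ 2) :
    (∀ l ∈ Set.Ici lam₁, deriv r l > deriv r lam₁ * Real.exp (-C / r lam₁)) ∧
    Filter.Tendsto r Filter.atTop Filter.atTop := by
  have hr1 : Differentiable ℝ r := hr.differentiable two_ne_zero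
  have hr2 : Differentiable ℝ (deriv r) := hr.differentiable_deriv_two
  set ε := deriv r lam₁ * exp (-C / r lam₁)
  have hε : 0 < ε := by positivity
  have hlower : ∀ l ∈ Ici lam₁, ε < deriv r l := by
    refine lt_of_mem_Ici_of_forall_le_on_Icc hr2.continuous.continuousOn ?_ fun c hc hεc => ?_
    · exact mul_lt_of_lt_one_right hd1 <| exp_lt_one_iff.2 <|
        div_neg_of_neg_of_pos (neg_neg_iff_pos.2 hC) (hpos lam₁ self_mem_Ici)
    have hd : ∀ x ∈ Icc lam₁ c, 0 < deriv r x := fun x hx => hε.trans_le (hεc x hx)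
    exact mul_exp_neg_div_lt_deriv hC.le hc hr1 hr2 (fun x hx => hpos x hx.1) hd
      fun x hx => hineq x hx.1.le (hd x (Ioo_subset_Icc_self hx))
  exact ⟨hlower, tendsto_atTop_of_pos_le_deriv hε hr1 fun x hx => (hlower x hx).le⟩
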